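/- (Compactness claim) Under the hypothesis that there exist a finite subgraph G_K and C > 0 with C‖σ‖_W ≤ ‖Dσ‖_{ℓ²(G)} for all σ finitely supported outside G_K: if (σₙ) is a sequence of finitely supported pairs that is bounded in W and (Dσₙ) converges in ℓ²(G), then (σₙ) has a subsequence converging in W. -/

import Mathlib

open scoped BigOperators
open Function Filter

structure WGraph (V : Type*) where
  E : Set (V × V)
  symm : ∀ e ∈ E, (e.2, e.1) ∈ E
  noloop : ∀ v : V, (v, v) ∉ E
  c : V → ℝ
  r : V × V → ℝ
  cpos : ∀ v, 0 < c v
  rpos : ∀ e, 0 < r e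
  rsymm : ∀ e : V × V, r (e.2, e.1) = r e
  locfin : ∀ v : V, {e : V × V | e ∈ E ∧ e.1 = v}.Finite

variable {V : Type*}

/-- The difference operator `(df)(e) = f(e⁺) - f(e⁻)`. -/
def dOp (f : V → ℝ) : V × V → ℝ := fun e => f e.2 - f e.1

/-- The coboundary operator `(δφ)(x) = (1/c x) Σ_{e ∈ E, e⁺ = x} r e * φ e`. -/
noncomputable def deltaOp (G : WGraph V) (φ : V × V → ℝ) : V → ℝ :=
  fun x => (G.c x)⁻¹ * ∑ᶠ e ∈ {e : V × V | e ∈ G.E ∧ e.2 = x}, G.r e * φ e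

/-- Skewsymmetric function on oriented edges. -/
def Skew (φ : V × V → ℝ) : Prop := ∀ e : V × V, φ (e.2, e.1) = -φ e

/-- Finitely supported function. -/
def FinSupp {α β : Type*} [Zero β] (f : α → β) : Prop := (Function.support f).Finite

/-- Connectedness of a graph: any two vertices joined by a path of edges. -/
def WGraph.Connected (G : WGraph V) : Prop :=
  ∀ x y : V, ∃ n : ℕ, ∃ p : ℕ → V, p 0 = x ∧ p n = y ∧ ∀ i < n, (p i, p (i + 1)) ∈ G.E

/-- Inner product on vertex functions: `Σ_x c x * f x * g x`. -/
noncomputable def innerV (G : WGraph V) (f g : V → ℝ) : ℝ := ∑ᶠ x : V, G.c x * (f x * g x)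

/-- Inner product on edge functions: `(1/2) Σ_{e ∈ E} r e * φ e * ψ e`. -/
noncomputable def innerE (G : WGraph V) (φ ψ : V × V → ℝ) : ℝ :=
  (1 / 2) * ∑ᶠ e ∈ G.E, G.r e * (φ e * ψ e)

/-- Squared ℓ² norm of the pair `(f, φ)` restricted to vertices in `S` and edges in `T`. -/
noncomputable def sqnormOn (G : WGraph V) (S : Set V) (T : Set (V × V)) (f : V → ℝ)
    (φ : V × V → ℝ) : ℝ :=
  (∑ᶠ x ∈ S, G.c x * f x ^ 2) + (1 / 2) * ∑ᶠ e ∈ T, G.r e * φ e ^ 2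

/-- Edges of the subgraph induced by `K`. -/
def EK (G : WGraph V) (K : Set V) : Set (V × V) := {e ∈ G.E | e.1 ∈ K ∧ e.2 ∈ K}

/-- Edge boundary of `K`: edges with exactly one endpoint in `K`. -/
def edgeBdry (G : WGraph V) (K : Set V) : Set (V × V) :=
  {e ∈ G.E | (e.1 ∈ K ∧ e.2 ∉ K) ∨ (e.1 ∉ K ∧ e.2 ∈ K)}

/-- `D = d + δ` is non-parabolic at infinity with respect to the finite subgraph on `K`. -/
noncomputable def NonParabolicAt (G : WGraph V) (K : Set V) : Prop :=
  ∀ VU : Set V, ∀ EU : Set (V × V), VU.Finite → EU.Finite →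
    VU ⊆ Kᶜ → EU ⊆ G.E \ EK G K →
    ∃ C > 0, ∀ f : V → ℝ, ∀ φ : V × V → ℝ,
      FinSupp f → FinSupp φ → Skew φ →
      Function.support f ⊆ Kᶜ → Function.support φ ⊆ G.E \ EK G K →
      C * Real.sqrt (sqnormOn G VU EU f φ) ≤
        Real.sqrt (sqnormOn G Kᶜ (G.E \ EK G K) (deltaOp G φ) (dOp f))

/-- `(Kt, Et)` is a (finite-subgraph) neighborhood of the subgraph on `K`. -/
def IsNbhd (G : WGraph V) (K Kt : Set V) (Et : Set (V × V)) : Prop :=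
  Kt.Finite ∧ Et.Finite ∧ K ⊆ Kt ∧ EK G K ∪ edgeBdry G K ⊆ Et ∧ Et ⊆ G.E ∧
    ∀ e ∈ Et, e.1 ∈ Kt ∧ e.2 ∈ Kt

/-- Existence of a cycle in the graph. -/
def HasCycle (G : WGraph V) : Prop :=
  ∃ n : ℕ, 3 ≤ n ∧ ∃ p : ℕ → V, p n = p 0 ∧
    (∀ i j : ℕ, i < n → j < n → p i = p j → i = j) ∧ ∀ i < n, (p i, p (i + 1)) ∈ G.E

/-- The outward edges of generation `m` in the two binary subtrees (`Ev` and `Bv` sides)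
emanating from the vertex `x₀` of the triadic tree. -/
def genEdges (x₀ : V) (Ev Bv : ℕ → ℕ → V) : ℕ → Set (V × V)
  | 0 => {(x₀, Ev 0 0), (x₀, Bv 0 0)}
  | m + 1 => {p | ∃ k, k < 2 ^ (m + 1) ∧
      (p = (Ev m (k / 2), Ev (m + 1) k) ∨ p = (Bv m (k / 2), Bv (m + 1) k))}

/-- A set of oriented edges together with all reversed edges. -/
def symEdges (S : Set (V × V)) : Set (V × V) := {p | p ∈ S ∨ (p.2, p.1) ∈ S}

/-!
Split each `σ n` into its part on the finite subgraph `(K, EK G K)` and its part outside it.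
The inner parts have finitely many coordinates, each controlled by `‖j (σ n)‖` through the
continuous map `ι`, so by Bolzano–Weierstrass a subsequence of them converges, and `j` is
continuous on that finite-dimensional space. Along this subsequence `D` of the outer parts
converges, and the coercive estimate `C ‖w‖ ≤ ‖D w‖` for pairs supported outside `K` turns
this into a Cauchy sequence in the complete space `W`.
-/

open Topology

section Truncation

variable {α β : Type*}

noncomputable def truncate (A : Set α) (B : Set β) :
    ((α → ℝ) × (β → ℝ)) →ₗ[ℝ] (α → ℝ) × (β → ℝ) where
  toFun p := (A.indicator p.1, B.indicator p.2)
  map_add' p q := Prod.ext (Set.indicator_add' A p.1 q.1) (Set.indicator_add' B p.2 q.2)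
  map_smul' c p := Prod.ext (Set.indicator_const_smul A c p.1) (Set.indicator_const_smul B c p.2)

@[simp]
lemma truncate_apply (A : Set α) (B : Set β) (p : (α → ℝ) × (β → ℝ)) :
    truncate A B p = (A.indicator p.1, B.indicator p.2) := rfl

lemma truncate_add_truncate_compl (A : Set α) (B : Set β) (p : (α → ℝ) × (β → ℝ)) :
    truncate A B p + truncate Aᶜ Bᶜ p = p := by
  simp [Set.indicator_self_add_compl]

def restrictPair (A : Set α) (B : Set β) : ((α → ℝ) × (β → ℝ)) →L[ℝ] (A → ℝ) × (B → ℝ) :=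
  (ContinuousLinearMap.pi fun x : A => ContinuousLinearMap.proj (x : α)).prodMap
    (ContinuousLinearMap.pi fun e : B => ContinuousLinearMap.proj (e : β))

noncomputable def extendPairByZero (A : Set α) (B : Set β) :
    ((A → ℝ) × (B → ℝ)) →ₗ[ℝ] (α → ℝ) × (β → ℝ) :=
  (Function.ExtendByZero.linearMap ℝ Subtype.val).prodMap
    (Function.ExtendByZero.linearMap ℝ Subtype.val)

lemma extend_val_eq_indicator {γ M : Type*} [Zero M] (A : Set γ) (f : γ → M) :
    Function.extend (Subtype.val : A → γ) (fun x => f x) 0 = A.indicator f := by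
  funext x
  by_cases hx : x ∈ A
  · rw [Set.indicator_of_mem hx]
    exact Subtype.val_injective.extend_apply (fun x : A => f x) 0 ⟨x, hx⟩
  · rw [Set.indicator_of_notMem hx, Function.extend_apply' _ _ _ (by simpa using hx)]
    rfl

lemma extendPairByZero_restrictPair (A : Set α) (B : Set β) (p : (α → ℝ) × (β → ℝ)) :
    extendPairByZero A B (restrictPair A B p) = truncate A B p :=
  Prod.ext (extend_val_eq_indicator A p.1) (extend_val_eq_indicator B p.2)

lemma exists_tendsto_subseq_truncate {W : Type*} [NormedAddCommGroup W] [NormedSpace ℝ W]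
    (j : ((α → ℝ) × (β → ℝ)) →ₗ[ℝ] W) (ι : W →L[ℝ] (α → ℝ) × (β → ℝ))
    {A : Set α} {B : Set β} (hA : A.Finite) (hB : B.Finite)
    {σ : ℕ → (α → ℝ) × (β → ℝ)} (hσ : ∀ n, ι (j (σ n)) = σ n) {M : ℝ}
    (hM : ∀ n, ‖j (σ n)‖ ≤ M) :
    ∃ ψ : ℕ → ℕ, StrictMono ψ ∧
      ∃ w : W, Tendsto (fun n => j (truncate A B (σ (ψ n)))) atTop (𝓝 w) := by
  have := hA.fintype
  have := hB.fintype
  set R := (restrictPair A B).comp ι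
  have hbdd : ∀ n, R (j (σ n)) ∈ Metric.closedBall 0 (‖R‖ * M) := fun n => by
    rw [mem_closedBall_zero_iff]
    exact (R.le_opNorm _).trans (by gcongr; exact hM n)
  obtain ⟨v, -, ψ, hψ, hv⟩ := tendsto_subseq_of_bounded Metric.isBounded_closedBall hbdd
  refine ⟨ψ, hψ, (j ∘ₗ extendPairByZero A B) v, ?_⟩
  have hcont := LinearMap.continuous_of_finiteDimensional (j ∘ₗ extendPairByZero A B)
  convert (hcont.tendsto v).comp hv using 2 with n
  simp [R, hσ, extendPairByZero_restrictPair]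

end Truncation

lemma cauchySeq_of_mul_dist_le {X Y : Type*} [PseudoMetricSpace X] [PseudoMetricSpace Y]
    {u : ℕ → X} {v : ℕ → Y} {C : ℝ} (hC : 0 < C)
    (h : ∀ n m, C * dist (u n) (u m) ≤ dist (v n) (v m)) (hv : CauchySeq v) : CauchySeq u := by
  rw [cauchySeq_iff_tendsto_dist_atTop_0] at hv ⊢
  refine squeeze_zero (fun _ => dist_nonneg) (fun p => ?_) (by simpa using hv.const_mul C⁻¹)
  rw [le_inv_mul_iff₀ hC]
  exact h p.1 p.2

lemma FinSupp.sub {α M : Type*} [AddGroup M] {f g : α → M} (hf : FinSupp f) (hg : FinSupp g) :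
    FinSupp (f - g) :=
  (hf.union hg).subset (Function.support_sub f g)

lemma FinSupp.indicator {α M : Type*} [Zero M] {f : α → M} (hf : FinSupp f) (s : Set α) :
    FinSupp (s.indicator f) :=
  hf.subset (Set.support_indicator.trans_subset Set.inter_subset_right)

lemma Skew.sub {φ ψ : V × V → ℝ} (hφ : Skew φ) (hψ : Skew ψ) : Skew (φ - ψ) := fun e => by
  simp only [Pi.sub_apply, hφ e, hψ e, neg_sub_neg, neg_sub]

lemma Skew.indicator {φ : V × V → ℝ} (hφ : Skew φ) {B : Set (V × V)}
    (hB : Prod.swap ⁻¹' B = B) : Skew (B.indicator φ) := fun e => by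
  have hswap : (e.2, e.1) ∈ B ↔ e ∈ B := Set.ext_iff.mp hB e
  by_cases he : e ∈ B
  · rw [Set.indicator_of_mem he, Set.indicator_of_mem (hswap.mpr he), hφ e]
  · rw [Set.indicator_of_notMem he, Set.indicator_of_notMem (mt hswap.mp he), neg_zero]

lemma preimage_swap_EK (G : WGraph V) (K : Set V) : Prod.swap ⁻¹' EK G K = EK G K := by
  ext e
  constructor <;> rintro ⟨hE, h1, h2⟩ <;> exact ⟨G.symm _ hE, h2, h1⟩

lemma EK_finite (G : WGraph V) {K : Set V} (hK : K.Finite) : (EK G K).Finite :=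
  (hK.biUnion fun v _ => G.locfin v).subset fun _ he => Set.mem_biUnion he.2.1 ⟨he.1, rfl⟩

lemma mul_norm_sub_le_of_truncate_compl {W H : Type*} [NormedAddCommGroup W] [NormedSpace ℝ W]
    [NormedAddCommGroup H] [NormedSpace ℝ H] (G : WGraph V)
    (j : ((V → ℝ) × (V × V → ℝ)) →ₗ[ℝ] W) (D : W →L[ℝ] H) (K : Set V) (C : ℝ)
    (hineq : ∀ f : V → ℝ, ∀ φ : V × V → ℝ,
      FinSupp f → FinSupp φ → Skew φ → Function.support φ ⊆ G.E →
      Function.support f ⊆ Kᶜ → Function.support φ ⊆ (EK G K)ᶜ →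
      C * ‖j (f, φ)‖ ≤ ‖D (j (f, φ))‖)
    {p q : (V → ℝ) × (V × V → ℝ)}
    (hp : FinSupp p.1 ∧ FinSupp p.2 ∧ Skew p.2 ∧ Function.support p.2 ⊆ G.E)
    (hq : FinSupp q.1 ∧ FinSupp q.2 ∧ Skew q.2 ∧ Function.support q.2 ⊆ G.E) :
    C * ‖j (truncate Kᶜ (EK G K)ᶜ p) - j (truncate Kᶜ (EK G K)ᶜ q)‖ ≤
      ‖D (j (truncate Kᶜ (EK G K)ᶜ p)) - D (j (truncate Kᶜ (EK G K)ᶜ q))‖ := by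
  obtain ⟨hp₁, hp₂, hp₃, hp₄⟩ := hp
  obtain ⟨hq₁, hq₂, hq₃, hq₄⟩ := hq
  simp only [← map_sub]
  refine hineq _ _ ((hp₁.sub hq₁).indicator _) ((hp₂.sub hq₂).indicator _)
    ((hp₃.sub hq₃).indicator (by rw [Set.preimage_compl, preimage_swap_EK]))
    ?_ (Set.support_indicator_subset) (Set.support_indicator_subset)
  rw [Set.support_indicator]
  exact Set.inter_subset_right.trans
    ((Function.support_sub _ _).trans (Set.union_subset hp₄ hq₄))

theorem stmt12_general (G : WGraph V)
    {W H : Type*} [NormedAddCommGroup W] [InnerProductSpace ℝ W] [CompleteSpace W]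
    [NormedAddCommGroup H] [InnerProductSpace ℝ H]
    (j : ((V → ℝ) × (V × V → ℝ)) →ₗ[ℝ] W)
    (D : W →L[ℝ] H)
    (S : Set ((V → ℝ) × (V × V → ℝ)))
    (hS : S = {p | FinSupp p.1 ∧ FinSupp p.2 ∧ Skew p.2 ∧ Function.support p.2 ⊆ G.E})
    (ι : W →L[ℝ] ((V → ℝ) × (V × V → ℝ)))
    (hι : ∀ p ∈ S, ι (j p) = p)
    (K : Set V) (hK : K.Finite) (C : ℝ) (hC : 0 < C)
    (hineq : ∀ f : V → ℝ, ∀ φ : V × V → ℝ,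
      FinSupp f → FinSupp φ → Skew φ → Function.support φ ⊆ G.E →
      Function.support f ⊆ Kᶜ → Function.support φ ⊆ (EK G K)ᶜ →
      C * ‖j (f, φ)‖ ≤ ‖D (j (f, φ))‖) :
    ∀ σ : ℕ → ((V → ℝ) × (V × V → ℝ)), (∀ n, σ n ∈ S) →
      (∃ M : ℝ, ∀ n, ‖j (σ n)‖ ≤ M) →
      (∃ y : H, Filter.Tendsto (fun n => D (j (σ n))) Filter.atTop (nhds y)) →
      ∃ ψ : ℕ → ℕ, StrictMono ψ ∧
        ∃ w : W, Filter.Tendsto (fun n => j (σ (ψ n))) Filter.atTop (nhds w) := by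
  rintro σ hσS ⟨M, hM⟩ ⟨y, hy⟩
  subst hS
  have hsplit : ∀ n, j (σ n) =
      j (truncate K (EK G K) (σ n)) + j (truncate Kᶜ (EK G K)ᶜ (σ n)) := fun n => by
    rw [← map_add, truncate_add_truncate_compl]
  obtain ⟨ψ, hψ, w, hinner⟩ :=
    exists_tendsto_subseq_truncate j ι hK (EK_finite G hK) (fun n => hι _ (hσS n)) hM
  set outer := fun n => j (truncate Kᶜ (EK G K)ᶜ (σ (ψ n)))
  have hDouter : Tendsto (fun n => D (outer n)) atTop (𝓝 (y - D w)) := by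
    simpa [outer, hsplit] using
      (hy.comp hψ.tendsto_atTop).sub ((D.continuous.tendsto w).comp hinner)
  have houter : CauchySeq outer := cauchySeq_of_mul_dist_le hC (fun n m => by
      simpa only [dist_eq_norm] using
        mul_norm_sub_le_of_truncate_compl G j D K C hineq (hσS (ψ n)) (hσS (ψ m)))
    hDouter.cauchySeq
  obtain ⟨w', hw'⟩ := cauchySeq_tendsto_of_complete houter
  exact ⟨ψ, hψ, w + w', by simpa only [hsplit] using hinner.add hw'⟩

/-- compactness claim. -/
theorem stmt12 (G : WGraph V) [Infinite V] (hconn : G.Connected)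
    {W H : Type*} [NormedAddCommGroup W] [InnerProductSpace ℝ W] [CompleteSpace W]
    [NormedAddCommGroup H] [InnerProductSpace ℝ H] [CompleteSpace H]
    (j : ((V → ℝ) × (V × V → ℝ)) →ₗ[ℝ] W)
    (emb : ((V → ℝ) × (V × V → ℝ)) →ₗ[ℝ] H)
    (D : W →L[ℝ] H)
    (S : Set ((V → ℝ) × (V × V → ℝ)))
    (hS : S = {p | FinSupp p.1 ∧ FinSupp p.2 ∧ Skew p.2 ∧ Function.support p.2 ⊆ G.E})
    (hdense : Dense (j '' S))
    (ι : W →L[ℝ] ((V → ℝ) × (V × V → ℝ)))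
    (hι : ∀ p ∈ S, ι (j p) = p)
    (hemb : ∀ p ∈ S, ‖emb p‖ = Real.sqrt (sqnormOn G Set.univ G.E p.1 p.2))
    (hD : ∀ p ∈ S, D (j p) = emb (deltaOp G p.2, dOp p.1))
    (K : Set V) (hK : K.Finite) (C : ℝ) (hC : 0 < C)
    (hineq : ∀ f : V → ℝ, ∀ φ : V × V → ℝ,
      FinSupp f → FinSupp φ → Skew φ → Function.support φ ⊆ G.E →
      Function.support f ⊆ Kᶜ → Function.support φ ⊆ (EK G K)ᶜ →
      C * ‖j (f, φ)‖ ≤ ‖D (j (f, φ))‖) :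
    ∀ σ : ℕ → ((V → ℝ) × (V × V → ℝ)), (∀ n, σ n ∈ S) →
      (∃ M : ℝ, ∀ n, ‖j (σ n)‖ ≤ M) →
      (∃ y : H, Filter.Tendsto (fun n => D (j (σ n))) Filter.atTop (nhds y)) →
      ∃ ψ : ℕ → ℕ, StrictMono ψ ∧
        ∃ w : W, Filter.Tendsto (fun n => j (σ (ψ n))) Filter.atTop (nhds w) :=
  stmt12_general G j D S hS ι hι K hK C hC hineq
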